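/- Define φ(t) = [ (π/8.5)·(t + 8.5) ]^t / Γ(t + 2). Then ln(φ(t)) is monotonically increasing for t ≥ 310. -/

import Mathlib

/-!
Writing `ψ = (log ∘ Γ)'`, the function is `t log (π/8.5 · (t + 8.5)) - log Γ(t + 2)` with derivative
`log (π/8.5 · (t + 8.5)) + t/(t + 8.5) - ψ(t + 2)`. Convexity of `log Γ` gives `ψ(x) ≤ log x`;
telescoping `ψ(x) = ψ(x + n) - ∑_{k<n} 1/(x + k)` against the trapezoid bound
`log (x + 1) - log x ≤ (1/x + 1/(x + 1))/2` and letting `n → ∞` sharpens this to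
`ψ(x) ≤ log x - 1/(2x)`. Both logarithmic bounds used, this one and
`log b - log a ≥ 2(b - a)/(b + a)`, come from the series `log b - log a = 2 ∑ y^(2k+1)/(2k+1)`,
`y = (b - a)/(b + a)`. Together with `log (8.5/π) ≤ 8.5/(π e) < 0.9954` the derivative is then
bounded below by a rational function of `t`, nonnegative from `t = 310` on (with margin about
`10⁻⁴` there).
-/

open Real Set Filter Topology

lemma hasSum_log_sub_log {a b : ℝ} (ha : 0 < a) (hb : 0 < b) :
    HasSum (fun k : ℕ => 2 * (1 / (2 * k + 1)) * ((b - a) / (b + a)) ^ (2 * k + 1))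
      (log b - log a) := by
  have hab : 0 < b + a := by linarith
  have hy : |(b - a) / (b + a)| < 1 := by
    rw [abs_div, abs_of_pos hab, div_lt_one hab, abs_lt]
    constructor <;> linarith
  have h1 : 1 + (b - a) / (b + a) = 2 * b / (b + a) := by field_simp; ring
  have h2 : 1 - (b - a) / (b + a) = 2 * a / (b + a) := by field_simp; ring
  convert hasSum_log_sub_log_of_abs_lt_one hy using 1
  rw [h1, h2, ← log_div hb.ne' ha.ne', ← log_div (by positivity) (by positivity)]
  congr 1
  field_simp

lemma two_mul_sub_div_add_le_log_sub_log {a b : ℝ} (ha : 0 < a) (hab : a ≤ b) :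
    2 * (b - a) / (b + a) ≤ log b - log a := by
  have hy : 0 ≤ (b - a) / (b + a) := div_nonneg (by linarith) (by linarith)
  have h := le_hasSum (hasSum_log_sub_log ha (ha.trans_le hab)) 0 (fun k _ => by positivity)
  simpa [mul_div_assoc] using h

lemma log_sub_log_le_mul_inv_add_inv {a b : ℝ} (ha : 0 < a) (hab : a ≤ b) :
    log b - log a ≤ (b - a) / 2 * (a⁻¹ + b⁻¹) := by
  have hb : 0 < b := ha.trans_le hab
  set y := (b - a) / (b + a) with hy
  have hy0 : 0 ≤ y := div_nonneg (by linarith) (by linarith)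
  have hy1 : y ^ 2 < 1 := by
    rw [sq_lt_one_iff₀ hy0, hy, div_lt_one (by linarith)]
    linarith
  have hgeom := (hasSum_geometric_of_lt_one (sq_nonneg y) hy1).mul_left (2 * y)
  refine (hasSum_le (fun k => ?_) (hasSum_log_sub_log ha hb) hgeom).trans_eq ?_
  · rw [← pow_mul, pow_succ, mul_comm (y ^ _) y, ← mul_assoc]
    gcongr
    rw [mul_le_iff_le_one_right two_pos, div_le_one (by positivity)]
    linarith [k.cast_nonneg (α := ℝ)]
  · have hy2 : 1 - y ^ 2 = 4 * a * b / (b + a) ^ 2 := by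
      rw [hy]
      field_simp
      ring
    rw [hy2, hy]
    field_simp
    ring

lemma differentiableAt_log_Gamma {x : ℝ} (hx : 0 < x) :
    DifferentiableAt ℝ (log ∘ Gamma) x := by
  have hx' : ∀ m : ℕ, x ≠ -m := fun m => by linarith [m.cast_nonneg (α := ℝ)]
  exact (differentiableAt_Gamma hx').log (Gamma_ne_zero hx')

lemma log_Gamma_add_one {x : ℝ} (hx : 0 < x) :
    log (Gamma (x + 1)) = log (Gamma x) + log x := by
  rw [Gamma_add_one hx.ne', log_mul hx.ne' (Gamma_pos_of_pos hx).ne', add_comm]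

lemma deriv_log_Gamma_add_one {x : ℝ} (hx : 0 < x) :
    deriv (log ∘ Gamma) (x + 1) = deriv (log ∘ Gamma) x + x⁻¹ := by
  rw [← deriv_comp_add_const, ← deriv_log,
    ← deriv_add (differentiableAt_log_Gamma hx) (differentiableAt_log hx.ne')]
  refine Filter.EventuallyEq.deriv_eq ?_
  filter_upwards [eventually_gt_nhds hx] with y hy
  exact log_Gamma_add_one hy

lemma deriv_log_Gamma_le_log {x : ℝ} (hx : 0 < x) : deriv (log ∘ Gamma) x ≤ log x := by
  have hslope := convexOn_log_Gamma.deriv_le_slope (mem_Ioi.mpr hx)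
    (mem_Ioi.mpr (by linarith : 0 < x + 1)) (by linarith) (differentiableAt_log_Gamma hx)
  rwa [slope_def_field, Function.comp_apply, Function.comp_apply, log_Gamma_add_one hx,
    add_sub_cancel_left, add_sub_cancel_left, div_one] at hslope

lemma deriv_log_Gamma_le_log_sub_add (n : ℕ) {x : ℝ} (hx : 0 < x) :
    deriv (log ∘ Gamma) x ≤ log x - (2 * x)⁻¹ + (2 * (x + n))⁻¹ := by
  induction n generalizing x with
  | zero =>
    simpa using deriv_log_Gamma_le_log hx
  | succ n ih =>
    have hrec := deriv_log_Gamma_add_one hx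
    have hnext := ih (x := x + 1) (by linarith)
    have htrap := log_sub_log_le_mul_inv_add_inv hx (by linarith : x ≤ x + 1)
    have hinv : (2 * x)⁻¹ = x⁻¹ / 2 := by rw [mul_inv, mul_comm]; ring
    have hinv1 : (2 * (x + 1))⁻¹ = (x + 1)⁻¹ / 2 := by rw [mul_inv, mul_comm]; ring
    rw [add_sub_cancel_left] at htrap
    push_cast
    rw [show x + (n + 1 : ℝ) = x + 1 + n by ring]
    linarith

lemma deriv_log_Gamma_le_log_sub {x : ℝ} (hx : 0 < x) :
    deriv (log ∘ Gamma) x ≤ log x - (2 * x)⁻¹ := by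
  have htail : Tendsto (fun n : ℕ => (2 * (x + n))⁻¹) atTop (𝓝 0) :=
    tendsto_inv_atTop_zero.comp <| tendsto_id.const_mul_atTop' two_pos |>.comp <|
      tendsto_atTop_add_const_left _ x tendsto_natCast_atTop_atTop
  simpa using ge_of_tendsto' (tendsto_const_nhds.add htail)
    (fun n => deriv_log_Gamma_le_log_sub_add n hx)

lemma log_div_pi_lt : log (8.5 / π) < 0.9954 := by
  have hpe : 0 < π * exp 1 := by positivity
  have h := log_le_sub_one_of_pos (show 0 < 8.5 / (π * exp 1) by positivity)
  rw [log_div (by norm_num) hpe.ne', log_mul pi_ne_zero (exp_pos 1).ne', log_exp] at h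
  rw [log_div (by norm_num) pi_ne_zero]
  have hlt : 8.5 / (π * exp 1) < 0.9954 := by
    rw [div_lt_iff₀ hpe]
    nlinarith [pi_gt_d6, exp_one_gt_d9]
  linarith

lemma rational_bound_of_310_le {t : ℝ} (ht : 310 ≤ t) :
    0.9954 ≤ 13 / (2 * t + 21 / 2) + t / (t + 8.5) + (2 * (t + 2))⁻¹ := by
  have h1 : 0 < 2 * t + 21 / 2 := by linarith
  have h2 : 0 < t + 8.5 := by linarith
  have h3 : 0 < 2 * (t + 2) := by linarith
  rw [div_add_div _ _ h1.ne' h2.ne', ← one_div, div_add_div _ _ (by positivity) h3.ne',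
    le_div_iff₀ (by positivity)]
  nlinarith [mul_nonneg (mul_nonneg (sub_nonneg.2 ht) (sub_nonneg.2 ht)) (sub_nonneg.2 ht)]

lemma deriv_log_Gamma_add_two_le {t : ℝ} (ht : 310 ≤ t) :
    deriv (log ∘ Gamma) (t + 2) ≤ log (π / 8.5 * (t + 8.5)) + t / (t + 8.5) := by
  have hdigamma := deriv_log_Gamma_le_log_sub (show 0 < t + 2 by linarith)
  have hlog := two_mul_sub_div_add_le_log_sub_log (show 0 < t + 2 by linarith)
    (show t + 2 ≤ t + 8.5 by linarith)
  have hsplit : log (π / 8.5 * (t + 8.5)) = log (t + 8.5) - log (8.5 / π) := by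
    rw [log_mul (by positivity) (by linarith), ← inv_div, log_inv]
    ring
  rw [show 2 * (t + 8.5 - (t + 2)) / (t + 8.5 + (t + 2)) = 13 / (2 * t + 21 / 2) by ring]
    at hlog
  linarith [log_div_pi_lt, rational_bound_of_310_le ht]

lemma hasDerivAt_log_rpow_div_Gamma {c a t : ℝ} (hc : 0 < c) (hta : 0 < t + a)
    (ht : 0 < t + 2) :
    HasDerivAt (fun s => log ((c * (s + a)) ^ s / Gamma (s + 2)))
      (log (c * (t + a)) + t / (t + a) - deriv (log ∘ Gamma) (t + 2)) t := by
  have hlin : HasDerivAt (fun s => c * (s + a)) c t := by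
    simpa using ((hasDerivAt_id t).add_const a).const_mul c
  have hlog := hlin.log (by positivity)
  have hGamma := (differentiableAt_log_Gamma ht).hasDerivAt.comp t
    ((hasDerivAt_id t).add_const 2)
  have hsplit : ∀ᶠ s in 𝓝 t, log ((c * (s + a)) ^ s / Gamma (s + 2))
      = s * log (c * (s + a)) - (log ∘ Gamma) (s + 2) := by
    filter_upwards [Ioi_mem_nhds (by linarith : -a < t), Ioi_mem_nhds (by linarith : -2 < t)]
      with s hsa hs2
    have hpos : 0 < c * (s + a) := mul_pos hc (by linarith [mem_Ioi.1 hsa])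
    have hGamma_pos : 0 < Gamma (s + 2) := Gamma_pos_of_pos (by linarith [mem_Ioi.1 hs2])
    rw [log_div (rpow_pos_of_pos hpos s).ne' hGamma_pos.ne', log_rpow hpos, Function.comp_apply]
  refine (((hasDerivAt_id t).mul hlog).sub hGamma).congr_of_eventuallyEq hsplit
    |>.congr_deriv ?_
  rw [div_mul_cancel_left₀ hc.ne', id, div_eq_mul_inv]
  ring

theorem log_phi_monotone :
    MonotoneOn
      (fun t : ℝ =>
        Real.log ((Real.pi / 8.5 * (t + 8.5)) ^ t / Real.Gamma (t + 2)))
      (Set.Ici (310 : ℝ)) := by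
  have hderiv : ∀ t ∈ Ici (310 : ℝ), HasDerivAt
      (fun t : ℝ => log ((π / 8.5 * (t + 8.5)) ^ t / Gamma (t + 2)))
      (log (π / 8.5 * (t + 8.5)) + t / (t + 8.5) - deriv (log ∘ Gamma) (t + 2)) t :=
    fun t ht => hasDerivAt_log_rpow_div_Gamma (by positivity) (by linarith [mem_Ici.1 ht])
      (by linarith [mem_Ici.1 ht])
  refine monotoneOn_of_hasDerivWithinAt_nonneg (convex_Ici _)
    (fun t ht => (hderiv t ht).continuousAt.continuousWithinAt)
    (fun t ht => (hderiv t (interior_subset ht)).hasDerivWithinAt)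
    (fun t ht => sub_nonneg.2 (deriv_log_Gamma_add_two_le (interior_subset ht)))
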